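/- Let r ≥ 1, let w : ℕ → ℝ, f : ℕ → ℝ, g : ℕ → ℝ with g 0 = 0, and let k₁ < k₂ < ... < k_r be positive integers. Define the (r+1)×(r+1) matrix A by: a_{ij} = w(k_j)·f(k_i) for i < j ≤ r; a_{i,r+1} = f(k_i) for i ≤ r; a_{ii} = w(k_i)·(f(k_i) + g(0) − 1) for i ≤ r; a_{ij} = w(k_j)·(f(k_i) + g(k_i − k_j)) for j < i ≤ r; with last row entries a_{r+1,j} and a_{r+1,r+1} chosen so that the characteristic polynomial factors as stated. Under the assumptions that (F) f(k)=0 for all k ≤ k_r with k ∉ {k₁,...,k_r}, (G1) ∑_{k≥0} g(k) = 1, (G2) g(k − k_j) = 0 for all j and all k ≤ k_r with k ∉ {k₁,...,k_r}, and w(k) = χk + ρ: the characteristic polynomial of A equals (λ₁ − λ)·∏_{i=1}^r (w(k_i)(g(0) − 1) − λ), where λ₁ = ∑_{k≥1}(w(k)f(k) + χ·k·g(k)). In particular the eigenvalues of A are λ₁ and w(k_i)(g(0)−1) for i = 1,...,r. -/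

import Mathlib

/-!
The vector `u = (w k₁, …, w k_r, 1)` is a left eigenvector of `A` for `λ₁`. By (F) and (G2) the
`u`-weighted sum of column `j` is `w kⱼ (∑ₘ w m (f m + g (m − kⱼ)) − w kⱼ)` with `m` running over
all indices, and since `w` is affine and `g` sums to one (G1), `∑ₘ w m g (m − kⱼ)` equals
`∑ₘ χ m g m + w kⱼ`. As the last entry of `u` is `1`, replacing the last row of `A − λ` by
`uᵀ (A − λ) = (λ₁ − λ) uᵀ` does not change the determinant. Pulling out `λ₁ − λ` leaves a matrix
bordered by `uᵀ`, and the Schur complement of its corner `1` is `(w kⱼ (g (kᵢ − kⱼ) − δᵢⱼ) − λ δᵢⱼ)ᵢⱼ`,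
lower triangular because `k` is increasing and `g 0 = 0`.
-/

open Finset Matrix

theorem Matrix.det_updateRow_last_snoc_one {R : Type*} [CommRing R] {n : ℕ}
    (X : Matrix (Fin (n + 1)) (Fin (n + 1)) R) (v : Fin n → R) :
    (X.updateRow (Fin.last n) (Fin.snoc v 1)).det =
      (of fun i j => X i.castSucc j.castSucc - X i.castSucc (Fin.last n) * v j).det := by
  have hcast (i : Fin n) : Fin.castAdd 1 i = i.castSucc := rfl
  have hlast (i : Fin 1) : Fin.natAdd n i = Fin.last n := by rw [Fin.fin_one_eq_zero i]; rfl
  have hblocks : reindex finSumFinEquiv.symm finSumFinEquiv.symm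
      (X.updateRow (Fin.last n) (Fin.snoc v 1)) =
      fromBlocks (X.submatrix Fin.castSucc Fin.castSucc) (of fun i _ => X i.castSucc (Fin.last n))
        (of fun _ j => v j) 1 := by
    ext (i | i) (j | j) <;>
      simp [updateRow_apply, hcast, hlast, Fin.castSucc_ne_last, Fin.fin_one_eq_zero]
  rw [← det_reindex_self finSumFinEquiv.symm, hblocks, det_fromBlocks_one₂₂]
  congr 1
  ext i j
  simp [mul_apply]

theorem Matrix.det_sub_smul_one_of_snoc_vecMul_eq {R : Type*} [CommRing R] {n : ℕ}
    (A : Matrix (Fin (n + 1)) (Fin (n + 1)) R) (v : Fin n → R) (μ : R)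
    (hA : Fin.snoc v 1 ᵥ* A = μ • Fin.snoc v 1) (lam : R) :
    (A - lam • 1).det = (μ - lam) *
      (of (fun i j => A i.castSucc j.castSucc - A i.castSucc (Fin.last n) * v j) - lam • 1).det := by
  have hX : Fin.snoc v 1 ᵥ* (A - lam • 1) = (μ - lam) • Fin.snoc v 1 := by
    rw [vecMul_sub, vecMul_smul, vecMul_one, hA, sub_smul]
  have hrow := det_updateRow_sum (A - lam • 1) (Fin.last n) (Fin.snoc v 1)
  rw [← vecMul_eq_sum, hX, det_updateRow_smul, det_updateRow_last_snoc_one, Fin.snoc_last,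
    one_smul] at hrow
  rw [← hrow]
  congr 2
  ext i j
  simp only [sub_apply, smul_apply, of_apply, one_apply, Fin.castSucc_inj, Fin.castSucc_ne_last,
    if_false, smul_zero]
  ring

theorem Finset.sum_range_eq_sum_comp_add_sum_Ico {M ι : Type*} [AddCommMonoid M] [Fintype ι]
    {k : ι → ℕ} (hk : Function.Injective k) {c B : ℕ} (hkc : ∀ i, k i < c) (hcB : c ≤ B)
    {F : ℕ → M} (hF : ∀ m < c, (∀ i, m ≠ k i) → F m = 0) :
    ∑ m ∈ range B, F m = ∑ i, F (k i) + ∑ m ∈ Ico c B, F m := by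
  rw [← sum_range_add_sum_Ico F hcB, ← sum_image fun i _ j _ h => hk h]
  congr 1
  refine (sum_subset (fun m hm => ?_) fun m hmc hmk => hF m (mem_range.1 hmc) ?_).symm
  · obtain ⟨i, -, rfl⟩ := mem_image.1 hm
    exact mem_range.2 (hkc i)
  · exact fun i him => hmk (mem_image.2 ⟨i, mem_univ i, him.symm⟩)

theorem sum_range_mul_tsub_of_affine {R : Type*} [CommSemiring R] {w g : ℕ → R} {χ ρ : R}
    (hw : ∀ n, w n = χ * n + ρ) (hg0 : g 0 = 0) {N B c : ℕ} (hgN : ∀ m ≥ N, g m = 0)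
    (hcB : c + N ≤ B) :
    ∑ m ∈ range B, w m * g (m - c) = ∑ m ∈ range B, χ * m * g m + w c * ∑ m ∈ range B, g m := by
  obtain ⟨d, rfl⟩ : ∃ d, B = c + d := ⟨B - c, by omega⟩
  have hlow : ∑ m ∈ range c, w m * g (m - c) = 0 :=
    sum_eq_zero fun m hm => by rw [Nat.sub_eq_zero_of_le (mem_range.1 hm).le, hg0, mul_zero]
  have hshift (m : ℕ) : w (c + m) * g (c + m - c) = χ * m * g m + w c * g m := by
    rw [Nat.add_sub_cancel_left, hw, hw]; push_cast; ring
  have hχg : ∀ m ≥ N, χ * m * g m = 0 := fun m hm => by rw [hgN m hm, mul_zero]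
  rw [sum_range_add, hlow, zero_add, sum_congr rfl fun m _ => hshift m, sum_add_distrib, ← mul_sum,
    eventually_constant_sum hχg (by omega : N ≤ d),
    eventually_constant_sum hχg (by omega : N ≤ c + d),
    eventually_constant_sum hgN (by omega : N ≤ d),
    eventually_constant_sum hgN (by omega : N ≤ c + d)]

/-- The intensity matrix (7) of the urn; the index `i : Fin (r + 1)` stands for the paper's
`i + 1`, so `Fin.last r` is the row and column `r + 1`. -/
def urnMatrix (χ : ℝ) (w f g : ℕ → ℝ) {r : ℕ} (k : Fin r → ℕ) (kr B : ℕ) :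
    Matrix (Fin (r + 1)) (Fin (r + 1)) ℝ :=
  of fun i j =>
    if hi : (i : ℕ) < r then
      if hj : (j : ℕ) < r then
        if (i : ℕ) < (j : ℕ) then w (k ⟨j, hj⟩) * f (k ⟨i, hi⟩)
        else if (i : ℕ) = (j : ℕ) then
          w (k ⟨i, hi⟩) * (f (k ⟨i, hi⟩) + g 0 - 1)
        else w (k ⟨j, hj⟩) * (f (k ⟨i, hi⟩) + g (k ⟨i, hi⟩ - k ⟨j, hj⟩))
      else f (k ⟨i, hi⟩)
    else
      if hj : (j : ℕ) < r then
        w (k ⟨j, hj⟩) *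
          ∑ m ∈ Finset.Ico (kr + 1) B, w m * (f m + g (m - k ⟨j, hj⟩))
      else
        ∑ m ∈ Finset.Ico (kr + 1) B, w m * f m
          + ∑ m ∈ Finset.Ico 1 B, χ * m * g m

section urnMatrix

variable {χ : ℝ} {w f g : ℕ → ℝ} {r : ℕ} {k : Fin r → ℕ} {kr B : ℕ}

/-- Above the diagonal `k i - k j` truncates to `0`, so `g 0 = 0` lets one formula cover all
entries of the upper-left block. -/
theorem urnMatrix_castSucc_castSucc (hg0 : g 0 = 0) (hk : StrictMono k) (i j : Fin r) :
    urnMatrix χ w f g k kr B i.castSucc j.castSucc =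
      w (k j) * (f (k i) + g (k i - k j)) - if i = j then w (k j) else 0 := by
  simp only [urnMatrix, of_apply, Fin.val_castSucc, i.isLt, j.isLt, dif_pos, Fin.eta, Fin.val_inj,
    Fin.castSucc_inj, Fin.val_fin_lt, Fin.castSucc_lt_castSucc_iff]
  rcases lt_trichotomy i j with hij | rfl | hij
  · rw [if_pos hij, if_neg hij.ne, Nat.sub_eq_zero_of_le (hk hij).le, hg0]; ring
  · simp only [lt_self_iff_false, ↓reduceIte, tsub_self]; ring
  · rw [if_neg (not_lt.2 hij.le), if_neg hij.ne', if_neg hij.ne']; ring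

theorem urnMatrix_castSucc_last (i : Fin r) :
    urnMatrix χ w f g k kr B i.castSucc (Fin.last r) = f (k i) := by
  simp [urnMatrix]

theorem urnMatrix_last_castSucc (j : Fin r) :
    urnMatrix χ w f g k kr B (Fin.last r) j.castSucc =
      w (k j) * ∑ m ∈ Ico (kr + 1) B, w m * (f m + g (m - k j)) := by
  simp [urnMatrix]

theorem urnMatrix_last_last :
    urnMatrix χ w f g k kr B (Fin.last r) (Fin.last r) =
      ∑ m ∈ Ico (kr + 1) B, w m * f m + ∑ m ∈ Ico 1 B, χ * m * g m := by
  simp [urnMatrix]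

theorem snoc_vecMul_urnMatrix {ρ : ℝ} {M : ℕ} (hw : ∀ n, w n = χ * n + ρ) (hg0 : g 0 = 0)
    (hgM : ∀ m, M ≤ m → g m = 0) (hG1 : ∑ m ∈ range B, g m = 1) (hk : StrictMono k)
    (hkle : ∀ i, k i ≤ kr) (hB : M + kr < B)
    (hF : ∀ m, m ≤ kr → (∀ i : Fin r, m ≠ k i) → f m = 0)
    (hG2 : ∀ m, m ≤ kr → (∀ i : Fin r, m ≠ k i) → ∀ j : Fin r, g (m - k j) = 0) :
    Fin.snoc (fun i => w (k i)) 1 ᵥ* urnMatrix χ w f g k kr B =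
      (∑ m ∈ range B, (w m * f m + χ * m * g m)) • Fin.snoc (fun i => w (k i)) 1 := by
  have hsplit {F : ℕ → ℝ} (hF : ∀ m ≤ kr, (∀ i, m ≠ k i) → F m = 0) :=
    sum_range_eq_sum_comp_add_sum_Ico hk.injective (c := kr + 1)
      (fun i => Nat.lt_succ_of_le (hkle i)) (show kr + 1 ≤ B by omega)
      fun m hm => hF m (Nat.le_of_lt_succ hm)
  have hwf := hsplit (F := fun m => w m * f m) fun m hm hmk => by simp [hF m hm hmk]
  ext j
  refine Fin.lastCases ?_ (fun j => ?_) j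
  · have hχg : ∑ m ∈ Ico 1 B, χ * m * g m = ∑ m ∈ range B, χ * m * g m := by
      rw [sum_range_eq_add_Ico _ (by omega)]; simp
    simp only [vecMul, dotProduct, Fin.sum_univ_castSucc, Fin.snoc_castSucc, Fin.snoc_last,
      urnMatrix_castSucc_last, urnMatrix_last_last, Pi.smul_apply, smul_eq_mul, one_mul, mul_one,
      hχg, sum_add_distrib, hwf]
    ring
  · have hwfg := hsplit (F := fun m => w m * (f m + g (m - k j)))
      fun m hm hmk => by simp [hF m hm hmk, hG2 m hm hmk j]
    have hshift :=
      sum_range_mul_tsub_of_affine hw hg0 hgM (c := k j) (B := B) (by linarith [hkle j])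
    simp only [vecMul, dotProduct, Fin.sum_univ_castSucc, Fin.snoc_castSucc, Fin.snoc_last,
      urnMatrix_castSucc_castSucc hg0 hk, urnMatrix_last_castSucc, Pi.smul_apply, smul_eq_mul,
      one_mul, mul_sub, mul_ite, mul_zero, sum_sub_distrib, sum_ite_eq', mem_univ, if_true]
    simp only [mul_add, sum_add_distrib] at hwfg
    simp only [mul_left_comm (w (k _)) (w (k j)), ← mul_sum, mul_add, sum_add_distrib]
    linear_combination w (k j) * (hshift - hwfg) + w (k j) ^ 2 * hG1

theorem det_urnMatrix_reduced_sub_smul_one (hg0 : g 0 = 0) (hk : StrictMono k) (lam : ℝ) :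
    (of (fun i j => urnMatrix χ w f g k kr B i.castSucc j.castSucc -
        urnMatrix χ w f g k kr B i.castSucc (Fin.last r) * w (k j)) - lam • 1).det =
      ∏ i, (w (k i) * (g 0 - 1) - lam) := by
  rw [det_of_isLowerTriangular _ fun i j (hij : i < j) => ?_]
  · refine prod_congr rfl fun i _ => ?_
    simp only [urnMatrix_castSucc_castSucc hg0 hk, urnMatrix_castSucc_last, Matrix.sub_apply, of_apply,
      tsub_self, ↓reduceIte, Matrix.smul_apply, one_apply_eq, smul_eq_mul, mul_one, sub_left_inj]
    ring
  · simp [urnMatrix_castSucc_castSucc hg0 hk, urnMatrix_castSucc_last, hij.ne,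
      Nat.sub_eq_zero_of_le (hk hij).le, hg0, mul_comm]

end urnMatrix

/-- The characteristic polynomial of the intensity matrix `A` of the Pólya urn
factors as `(λ₁ − λ)·∏ᵢ (w(kᵢ)(g 0 − 1) − λ)`; in particular its eigenvalues are
`λ₁` and `w(kᵢ)(g 0 − 1)` for `i = 1,…,r`. -/
theorem stmt_0
    (r : ℕ) (hr : 0 < r)
    (χ ρ : ℝ) (f g : ℕ → ℝ)
    (k : Fin r → ℕ) (hk1 : ∀ i, 1 ≤ k i) (hkmono : StrictMono k)
    (w : ℕ → ℝ) (hw : ∀ n, w n = χ * n + ρ)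
    (hg0 : g 0 = 0)
    (M : ℕ) (hgM : ∀ m, M ≤ m → g m = 0)
    (kr : ℕ) (hkr : kr = k ⟨r - 1, by omega⟩)
    (B : ℕ) (hB : B = M + kr + 1)
    -- assumption (F)
    (hF : ∀ m, m ≤ kr → (∀ i : Fin r, m ≠ k i) → f m = 0)
    -- assumption (G1)
    (hG1 : ∑ m ∈ Finset.range B, g m = 1)
    -- assumption (G2)
    (hG2 : ∀ m, m ≤ kr → (∀ i : Fin r, m ≠ k i) → ∀ j : Fin r, g (m - k j) = 0)
    (lam1 : ℝ)
    (hlam1 : lam1 = ∑ m ∈ Finset.Ico 1 B, (w m * f m + χ * m * g m))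
    (A : Matrix (Fin (r + 1)) (Fin (r + 1)) ℝ)
    (hA : ∀ i j : Fin (r + 1),
      A i j =
        if hi : (i : ℕ) < r then
          if hj : (j : ℕ) < r then
            if (i : ℕ) < (j : ℕ) then w (k ⟨j, hj⟩) * f (k ⟨i, hi⟩)
            else if (i : ℕ) = (j : ℕ) then
              w (k ⟨i, hi⟩) * (f (k ⟨i, hi⟩) + g 0 - 1)
            else w (k ⟨j, hj⟩) * (f (k ⟨i, hi⟩) + g (k ⟨i, hi⟩ - k ⟨j, hj⟩))
          else f (k ⟨i, hi⟩)
        else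
          if hj : (j : ℕ) < r then
            w (k ⟨j, hj⟩) *
              ∑ m ∈ Finset.Ico (kr + 1) B, w m * (f m + g (m - k ⟨j, hj⟩))
          else
            ∑ m ∈ Finset.Ico (kr + 1) B, w m * f m
              + ∑ m ∈ Finset.Ico 1 B, χ * m * g m) :
    (∀ lam : ℝ,
        (A - lam • (1 : Matrix (Fin (r + 1)) (Fin (r + 1)) ℝ)).det
          = (lam1 - lam) * ∏ i : Fin r, (w (k i) * (g 0 - 1) - lam)) ∧
    (∀ lam : ℝ,
        (A - lam • (1 : Matrix (Fin (r + 1)) (Fin (r + 1)) ℝ)).det = 0 ↔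
          lam = lam1 ∨ ∃ i : Fin r, lam = w (k i) * (g 0 - 1)) := by
  have hkle (i : Fin r) : k i ≤ kr := hkr ▸ hkmono.monotone (Fin.mk_le_mk.2 (by omega))
  have hlam1' : lam1 = ∑ m ∈ range B, (w m * f m + χ * m * g m) := by
    have hf0' : f 0 = 0 := hF 0 (Nat.zero_le _) fun i h => by have := hk1 i; omega
    rw [hlam1, sum_range_eq_add_Ico _ (by omega)]
    simp [hf0']
  have hdet (lam : ℝ) : (A - lam • (1 : Matrix (Fin (r + 1)) (Fin (r + 1)) ℝ)).det
      = (lam1 - lam) * ∏ i : Fin r, (w (k i) * (g 0 - 1) - lam) := by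
    have hvec := snoc_vecMul_urnMatrix hw hg0 hgM hG1 hkmono hkle (by omega) hF hG2
    rw [show A = urnMatrix χ w f g k kr B from Matrix.ext hA,
      det_sub_smul_one_of_snoc_vecMul_eq _ _ _ hvec, det_urnMatrix_reduced_sub_smul_one hg0 hkmono,
      hlam1']
  refine ⟨hdet, fun lam => ?_⟩
  simp only [hdet, mul_eq_zero, sub_eq_zero, prod_eq_zero_iff, mem_univ, true_and]
  exact or_congr eq_comm (exists_congr fun _ => eq_comm)
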